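/- There exists a bipartite graph G (on 32 vertices) with a(G) = 25, α(G) = 16, μ(G) = 16 such that a(G) - α(G) > (μ(G) - 1)/2; hence the tree bound fails for bipartite graphs. -/

import Mathlib

/-!
The degree sequence is `1¹⁶ 2⁸ 5⁴ 7⁴`, so `m = 40`. The 25 vertices of smallest degree have
degree sum `37 ≤ 40`. Conversely, if a set has degree sum at most `m`, its complement has degree
sum at least `m` by the handshake lemma; as every degree exceeds 5 by a total of only 8, the
complement has at least 7 vertices. The edges `{v, v + 16}` form a perfect matching, which gives
`μ = 16` and `α ≤ 16`, and `A` is an independent set of size 16. Thus `a - α = 9 > 15 / 2`.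
-/

set_option maxRecDepth 4000

open Finset

namespace AnnPaper

variable {V : Type*}

/-- A finset of vertices is independent: no two of its members are adjacent. -/
def IsIndepFinset (G : SimpleGraph V) (s : Finset V) : Prop :=
  ∀ a ∈ s, ∀ b ∈ s, ¬ G.Adj a b

/-- The independence number `α(G)`. -/
noncomputable def indepNum (G : SimpleGraph V) : ℕ :=
  sSup {k | ∃ s : Finset V, IsIndepFinset G s ∧ s.card = k}

/-- A finset of edges is a matching: edges of `G`, pairwise vertex-disjoint. -/
def IsMatchingFinset (G : SimpleGraph V) (s : Finset (Sym2 V)) : Prop :=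
  (↑s ⊆ G.edgeSet) ∧ ∀ e ∈ s, ∀ f ∈ s, e ≠ f → ∀ v : V, v ∈ e → v ∉ f

/-- The matching number `μ(G)`. -/
noncomputable def matchNum (G : SimpleGraph V) : ℕ :=
  sSup {k | ∃ s : Finset (Sym2 V), IsMatchingFinset G s ∧ s.card = k}

/-- The number of edges `m(G)`. -/
noncomputable def edgeCount (G : SimpleGraph V) : ℕ := G.edgeSet.ncard

/-- The degree of a vertex. -/
noncomputable def deg (G : SimpleGraph V) (v : V) : ℕ := (G.neighborSet v).ncard

/-- The annihilation number `a(G)`: the largest `k` such that the sum of the `k`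
smallest degrees is at most `m(G)`; equivalently, the largest cardinality of a
set of vertices whose degree sum is at most `m(G)`. -/
noncomputable def annNum (G : SimpleGraph V) : ℕ :=
  sSup {k | ∃ A : Finset V, A.card = k ∧ ∑ v ∈ A, deg G v ≤ edgeCount G}

/-- The number of edges of the subgraph induced on a set of vertices. -/
noncomputable def inducedEdgeCount (G : SimpleGraph V) (A : Set V) : ℕ :=
  (SimpleGraph.induce A G).edgeSet.ncard

lemma sum_le_mul_card_add_sum_tsub {ι : Type*} {s t : Finset ι} (hst : s ⊆ t) (d : ι → ℕ)
    (c : ℕ) : ∑ i ∈ s, d i ≤ c * #s + ∑ i ∈ t, (d i - c) :=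
  calc ∑ i ∈ s, d i ≤ ∑ i ∈ s, (c + (d i - c)) := sum_le_sum fun i _ => le_add_tsub
    _ = c * #s + ∑ i ∈ s, (d i - c) := by rw [sum_add_distrib, sum_const, smul_eq_mul, mul_comm]
    _ ≤ c * #s + ∑ i ∈ t, (d i - c) := by gcongr

lemma isMatchingFinset_image_of_involutive [DecidableEq V] {G : SimpleGraph V} {f : V → V}
    (hf : f.Involutive) (hadj : ∀ v, G.Adj v (f v)) (s : Finset V) :
    IsMatchingFinset G (s.image fun v => s(v, f v)) := by
  have edge_eq : ∀ v x, x ∈ s(v, f v) → s(v, f v) = s(x, f x) := by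
    intro v x hx
    rcases Sym2.mem_iff.mp hx with rfl | rfl
    · rfl
    · rw [hf v, Sym2.eq_swap]
  constructor
  · intro e he
    obtain ⟨v, -, rfl⟩ := mem_image.mp he
    exact hadj v
  · intro e he e' he' hne x hx hx'
    obtain ⟨v, -, rfl⟩ := mem_image.mp he
    obtain ⟨w, -, rfl⟩ := mem_image.mp he'
    exact hne ((edge_eq v x hx).trans (edge_eq w x hx').symm)

section General

variable [Fintype V] {G : SimpleGraph V}

lemma deg_eq_degree [DecidableRel G.Adj] (v : V) : deg G v = G.degree v := by
  rw [deg, Set.ncard_eq_toFinset_card']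
  rfl

lemma edgeCount_eq_card_edgeFinset [DecidableRel G.Adj] : edgeCount G = #G.edgeFinset := by
  rw [edgeCount, Set.ncard_eq_toFinset_card', SimpleGraph.edgeFinset]

lemma sum_deg_eq_two_mul_edgeCount [DecidableRel G.Adj] : ∑ v, deg G v = 2 * edgeCount G := by
  simp only [deg_eq_degree, edgeCount_eq_card_edgeFinset, G.sum_degrees_eq_twice_card_edges]

lemma edgeCount_le_sum_deg_compl [DecidableEq V] [DecidableRel G.Adj] {A : Finset V}
    (hA : ∑ v ∈ A, deg G v ≤ edgeCount G) : edgeCount G ≤ ∑ v ∈ Aᶜ, deg G v := by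
  have := sum_add_sum_compl A (deg G)
  rw [sum_deg_eq_two_mul_edgeCount] at this
  omega

lemma IsIndepFinset.two_mul_card_le [DecidableEq V] {s : Finset V} (hs : IsIndepFinset G s)
    {f : V → V} (hf : f.Injective) (hadj : ∀ v, G.Adj v (f v)) : 2 * #s ≤ Fintype.card V := by
  have hdisj : Disjoint s (s.image f) := by
    refine disjoint_left.mpr fun x hx hx' => ?_
    obtain ⟨w, hw, rfl⟩ := mem_image.mp hx'
    exact hs w hw (f w) hx (hadj w)
  calc 2 * #s = #(s ∪ s.image f) := by
        rw [card_union_of_disjoint hdisj, card_image_of_injective s hf, two_mul]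
    _ ≤ Fintype.card V := card_le_univ _

lemma IsMatchingFinset.two_mul_card_le [DecidableEq V] {s : Finset (Sym2 V)}
    (hs : IsMatchingFinset G s) : 2 * #s ≤ Fintype.card V := by
  obtain ⟨hsub, hdisj⟩ := hs
  have hcard : ∀ e ∈ s, #e.toFinset = 2 := fun e he =>
    Sym2.card_toFinset_of_not_isDiag e (G.not_isDiag_of_mem_edgeSet (hsub he))
  have hpairwise : (s : Set (Sym2 V)).PairwiseDisjoint Sym2.toFinset :=
    fun e he f hf hef => disjoint_left.mpr fun v hve hvf =>
      hdisj e he f hf hef v (Sym2.mem_toFinset.mp hve) (Sym2.mem_toFinset.mp hvf)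
  calc 2 * #s = #(s.biUnion Sym2.toFinset) := by
        rw [card_biUnion hpairwise, sum_congr rfl hcard, sum_const, smul_eq_mul, mul_comm]
    _ ≤ Fintype.card V := card_le_univ _

end General

/-- Vertices `0, …, 15` form `A`, `16, …, 23` form `B`, and `24, …, 31` form `C`, whose
`K_{4,4}` has sides `24, …, 27` and `28, …, 31`. Vertex `v < 16` of `A` is matched to `v + 16`,
and `B`-vertex `16 + j` is joined to `28 + j / 2`. -/
def annGraph : SimpleGraph (Fin 32) := SimpleGraph.fromRel fun x y =>
  (x.val < 16 ∧ y.val = x.val + 16) ∨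
    (16 ≤ x.val ∧ x.val < 24 ∧ y.val = 28 + (x.val - 16) / 2) ∨
    (24 ≤ x.val ∧ x.val < 28 ∧ 28 ≤ y.val)

instance : DecidableRel annGraph.Adj := fun x y => by
  unfold annGraph; infer_instance

def partner (v : Fin 32) : Fin 32 := if v.val < 16 then v + 16 else v - 16

lemma partner_involutive : Function.Involutive partner := fun v => by
  revert v; decide

lemma adj_partner (v : Fin 32) : annGraph.Adj v (partner v) := by revert v; decide

lemma degree_annGraph (v : Fin 32) : annGraph.degree v =
    if v.val < 16 then 1 else if v.val < 24 then 2 else if v.val < 28 then 5 else 7 := by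
  revert v; decide

lemma annGraph_colorable_two : annGraph.Colorable 2 :=
  ⟨SimpleGraph.Coloring.mk (fun v => if v.val < 12 ∨ 28 ≤ v.val then 0 else 1)
    (fun {u v} => by revert u v; decide)⟩

lemma edgeCount_annGraph : edgeCount annGraph = 40 := by
  have h := sum_deg_eq_two_mul_edgeCount (G := annGraph)
  have hsum : ∑ v, deg annGraph v = 80 := by
    simp only [deg_eq_degree, degree_annGraph]
    decide
  omega

lemma annNum_annGraph : annNum annGraph = 25 := by
  refine IsGreatest.csSup_eq ⟨⟨univ.filter (·.val < 25), by decide, ?_⟩, ?_⟩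
  · rw [edgeCount_annGraph]
    simp only [deg_eq_degree, degree_annGraph]
    decide
  · rintro _ ⟨A, rfl, hA⟩
    have hcompl := (edgeCount_le_sum_deg_compl hA).trans
      (sum_le_mul_card_add_sum_tsub (subset_univ Aᶜ) (deg annGraph) 5)
    have hexcess : ∑ v, (deg annGraph v - 5) = 8 := by
      simp only [deg_eq_degree, degree_annGraph]
      decide
    rw [edgeCount_annGraph, hexcess, card_compl, Fintype.card_fin] at hcompl
    omega

lemma indepNum_annGraph : indepNum annGraph = 16 := by
  refine IsGreatest.csSup_eq ⟨⟨univ.filter (·.val < 16), ?_, by decide⟩, ?_⟩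
  · unfold IsIndepFinset
    decide
  · rintro _ ⟨s, hs, rfl⟩
    have := hs.two_mul_card_le partner_involutive.injective adj_partner
    rw [Fintype.card_fin] at this
    omega

lemma matchNum_annGraph : matchNum annGraph = 16 := by
  refine IsGreatest.csSup_eq ⟨⟨_, isMatchingFinset_image_of_involutive partner_involutive
    adj_partner univ, by decide⟩, ?_⟩
  rintro _ ⟨s, hs, rfl⟩
  have := hs.two_mul_card_le
  rw [Fintype.card_fin] at this
  omega

theorem stmt10 :
    ∃ G : SimpleGraph (Fin 32), G.Colorable 2 ∧
      annNum G = 25 ∧ indepNum G = 16 ∧ matchNum G = 16 ∧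
      ((matchNum G : ℚ) - 1) / 2 < (annNum G : ℚ) - (indepNum G : ℚ) := by
  refine ⟨annGraph, annGraph_colorable_two, annNum_annGraph, indepNum_annGraph,
    matchNum_annGraph, ?_⟩
  rw [annNum_annGraph, indepNum_annGraph, matchNum_annGraph]
  norm_num

end AnnPaper
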